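/- arXiv:2003.06281 — 4 statements merged into one kernel-verified Lean document; each statement's English description precedes it below -/
import Mathlib

section
/- Suppose the expected Kullback–Leibler divergence between the true posterior kernel and the model-induced posterior vanishes, i.e. ∫_X KL(P(x) ‖ Q(x)) dμ(x) = 0, where Q is the Markov kernel given by Q(x) = (e_x⁻¹)_*γ (the pushforward of the standard Gaussian γ under the inverse of the conditional invertible map e_x). Then for μ-almost every x: (i) the latent distribution (e_x)_*(P(x)) equals γ (so it is statistically independent of the conditioning data x), and (ii) the pushforward (e_x⁻¹)_*γ equals the true posterior P(x); that is, sampling z ∼ γ and applying the inverse map e_x⁻¹ produces samples from the true posterior. -/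
/-!
Vanishing of the expected divergence forces `KL(P x ‖ Q x) = 0` for `μ`-almost every `x`, hence
`P x = Q x = (e x)⁻¹_* γ` by the equality case of Gibbs' inequality; pushing forward along `e x`
then gives `(e x)_* (P x) = γ`. The only technical point is that `x ↦ KL(P x ‖ Q x)` is
measurable, which follows from the `f`-divergence form `∫ klFun (dP x/dQ x) d(Q x)` of the
divergence and a jointly measurable kernel Radon–Nikodym derivative.
-/

open MeasureTheory ProbabilityTheory
open scoped ENNReal NNReal Classical

/-- The Kullback–Leibler divergence `∫ log (dρ/dν) dρ`, defined to be `+∞` when `ρ` is not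
absolutely continuous with respect to `ν` (or when the log-density is not integrable). -/
noncomputable def klDiv {α : Type*} [MeasurableSpace α] (ρ ν : Measure α) : ℝ≥0∞ :=
  if ρ ≪ ν ∧ Integrable (fun a => Real.log (ρ.rnDeriv ν a).toReal) ρ then
    ENNReal.ofReal (∫ a, Real.log (ρ.rnDeriv ν a).toReal ∂ρ)
  else ⊤

section Measures

variable {α : Type*} [MeasurableSpace α] {ρ ν : Measure α}
  [IsProbabilityMeasure ρ] [IsProbabilityMeasure ν]

lemma klDiv_eq_informationTheory_klDiv : klDiv ρ ν = InformationTheory.klDiv ρ ν := by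
  rw [klDiv]
  split_ifs with h
  · rw [InformationTheory.klDiv_of_ac_of_integrable h.1 h.2]
    simp [llr]
  · exact (InformationTheory.klDiv_eq_top_iff.mpr fun hac hint => h ⟨hac, hint⟩).symm

lemma klDiv_eq_zero_iff : klDiv ρ ν = 0 ↔ ρ = ν := by
  rw [klDiv_eq_informationTheory_klDiv, InformationTheory.klDiv_eq_zero_iff]

end Measures

namespace ProbabilityTheory.Kernel

variable {α β : Type*} {mα : MeasurableSpace α} {mβ : MeasurableSpace β}
  [MeasurableSpace.CountableOrCountablyGenerated α β]

lemma measurable_informationTheory_klDiv (κ η : Kernel α β) [IsFiniteKernel κ]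
    [IsFiniteKernel η] : Measurable fun a => InformationTheory.klDiv (κ a) (η a) := by
  have h_lintegral : Measurable fun a =>
      ∫⁻ b, ENNReal.ofReal (InformationTheory.klFun (κ.rnDeriv η a b).toReal) ∂(η a) :=
    Measurable.lintegral_kernel_prod_right (by fun_prop)
  have h_eq (a : α) : InformationTheory.klDiv (κ a) (η a) = if κ a ≪ η a then
      ∫⁻ b, ENNReal.ofReal (InformationTheory.klFun (κ.rnDeriv η a b).toReal) ∂(η a) else ⊤ := by
    rw [InformationTheory.klDiv_eq_lintegral_klFun]
    congr 1
    refine lintegral_congr_ae ?_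
    filter_upwards [κ.rnDeriv_eq_rnDeriv_measure (η := η) (a := a)] with b hb
    rw [hb]
  simp_rw [h_eq]
  exact Measurable.ite (measurableSet_absolutelyContinuous κ η) h_lintegral measurable_const

variable {κ η : Kernel α β} [IsMarkovKernel κ] [IsMarkovKernel η]

lemma measurable_klDiv : Measurable fun a => klDiv (κ a) (η a) := by
  simp_rw [klDiv_eq_informationTheory_klDiv]
  exact measurable_informationTheory_klDiv κ η

lemma ae_eq_of_lintegral_klDiv_eq_zero {μ : Measure α} (h : ∫⁻ a, klDiv (κ a) (η a) ∂μ = 0) :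
    ∀ᵐ a ∂μ, κ a = η a := by
  filter_upwards [(lintegral_eq_zero_iff measurable_klDiv).mp h] with a ha
  exact klDiv_eq_zero_iff.mp ha

end ProbabilityTheory.Kernel

theorem bayesflow_correct_posterior_sampling_general
    {X : Type*} [MeasurableSpace X] (μ : Measure X)
    (D : ℕ)
    (γ : Measure (Fin D → ℝ))
    (P : Kernel X (Fin D → ℝ)) [IsMarkovKernel P]
    (e : X → (Fin D → ℝ) ≃ᵐ (Fin D → ℝ))
    (Q : Kernel X (Fin D → ℝ)) [IsMarkovKernel Q]
    (hQ : ∀ x, Q x = γ.map (e x).symm)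
    (hKL : ∫⁻ x, klDiv (P x) (Q x) ∂μ = 0) :
    ∀ᵐ x ∂μ, (P x).map (e x) = γ ∧ γ.map (e x).symm = P x := by
  filter_upwards [Kernel.ae_eq_of_lintegral_klDiv_eq_zero hKL] with x hPQ
  rw [hPQ, hQ x]
  exact ⟨MeasurableEquiv.map_map_symm (e x), rfl⟩

/-- **Proposition 1 of BayesFlow.** If the expected KL divergence between the true posterior
kernel `P` and the model-induced posterior `Q x = (e x)⁻¹_* γ` vanishes, then for `μ`-almost
every `x` the latent distribution `(e x)_* (P x)` equals the standard Gaussian `γ`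
(independence of the conditioning data) and the pushforward `(e x)⁻¹_* γ` equals the true
posterior `P x`. -/
theorem bayesflow_correct_posterior_sampling
    {X : Type*} [MeasurableSpace X] (μ : Measure X) [IsProbabilityMeasure μ]
    (D : ℕ) (hD : 0 < D)
    (γ : Measure (Fin D → ℝ))
    (hγ : γ = Measure.pi fun _ => gaussianReal 0 1)
    (P : Kernel X (Fin D → ℝ)) [IsMarkovKernel P]
    (e : X → (Fin D → ℝ) ≃ᵐ (Fin D → ℝ))
    (Q : Kernel X (Fin D → ℝ)) [IsMarkovKernel Q]
    (hQ : ∀ x, Q x = γ.map (e x).symm)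
    (hKL : ∫⁻ x, klDiv (P x) (Q x) ∂μ = 0) :
    ∀ᵐ x ∂μ, (P x).map (e x) = γ ∧ γ.map (e x).symm = P x :=
  bayesflow_correct_posterior_sampling_general μ D γ P e Q hQ hKL
end

section
/- Assume there is a Markov kernel P' from S to ℝ^D such that P(x) = P'(h(x)) for μ-almost every x (i.e., h(x) is a vector of sufficient summary statistics). Let e_s : ℝ^D ≃ ℝ^D be the conditional invertible map given summary s, and let γ be the standard Gaussian on ℝ^D. If the expected Kullback–Leibler divergence ∫_X KL(P(x) ‖ (e_{h(x)}⁻¹)_*γ) dμ(x) = 0, then for μ-almost every x the pushforward (e_{h(x)}⁻¹)_*γ equals the true posterior P(x); that is, independently sampling z ∼ γ and applying the inverse map conditioned on the learned summary h(x) yields independent samples from the true posterior of θ given x. -/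
open MeasureTheory ProbabilityTheory
open scoped ENNReal NNReal Classical

lemma eq_of_klDiv_eq_zero {α : Type*} [MeasurableSpace α] {ρ ν : Measure α}
    [IsProbabilityMeasure ρ] [IsProbabilityMeasure ν] (h0 : klDiv ρ ν = 0) : ρ = ν := by
  rw [klDiv] at h0
  split_ifs at h0 with hc
  · obtain ⟨hac, hint⟩ := hc
    set f := ρ.rnDeriv ν with hf
    have hfm : Measurable f := Measure.measurable_rnDeriv ρ ν
    have hpos : ∀ᵐ x ∂ρ, 0 < f x := Measure.rnDeriv_pos hac
    have hltν : ∀ᵐ x ∂ν, f x < ⊤ := Measure.rnDeriv_lt_top ρ ν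
    have hlt : ∀ᵐ x ∂ρ, f x < ⊤ := hac.ae_le hltν
    have hwd : ν.withDensity f = ρ := Measure.withDensity_rnDeriv_eq ρ ν hac
    -- the inverse integral
    have hJle : ∫⁻ x, (f x)⁻¹ ∂ρ ≤ 1 := by
      rw [← hwd, lintegral_withDensity_eq_lintegral_mul _ hfm (g := fun x => (f x)⁻¹) hfm.inv]
      calc ∫⁻ x, (f * f⁻¹) x ∂ν ≤ ∫⁻ _, 1 ∂ν := by
            refine lintegral_mono fun x => ?_
            simp only [Pi.mul_apply, Pi.inv_apply]
            exact ENNReal.mul_inv_le_one _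
        _ = 1 := by simp
    have hJne : ∫⁻ x, (f x)⁻¹ ∂ρ ≠ ⊤ := (lt_of_le_of_lt hJle ENNReal.one_lt_top).ne
    have hinv_int : Integrable (fun x => ((f x)⁻¹).toReal) ρ :=
      integrable_toReal_of_lintegral_ne_top hfm.inv.aemeasurable hJne
    have hinv_eq : ∫ x, ((f x)⁻¹).toReal ∂ρ = (∫⁻ x, (f x)⁻¹ ∂ρ).toReal := by
      refine integral_toReal hfm.inv.aemeasurable ?_
      filter_upwards [hpos] with x hx
      exact ENNReal.inv_lt_top.mpr hx
    have hIle : ∫ a, Real.log (f a).toReal ∂ρ ≤ 0 := by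
      by_contra hI
      push_neg at hI
      exact absurd h0 (by simp [ENNReal.ofReal_eq_zero, not_le, hI])
    have hint1 : Integrable (fun x => Real.log (f x).toReal - 1) ρ :=
      hint.sub (integrable_const 1)
    have hs1 : MeasurableSet {x | f x = 1} := hfm (measurableSet_singleton 1)
    set G := fun x => Real.log (f x).toReal - 1 + ((f x)⁻¹).toReal with hG
    have hGint : Integrable G ρ := hint1.add hinv_int
    have hGnn : 0 ≤ᵐ[ρ] G := by
      filter_upwards [hpos, hlt] with x hx hx'
      have ht : 0 < (f x).toReal := ENNReal.toReal_pos hx.ne' hx'.ne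
      have := Real.log_le_sub_one_of_pos (inv_pos.mpr ht)
      rw [Real.log_inv] at this
      simp only [hG, Pi.zero_apply, ENNReal.toReal_inv]
      linarith
    have hGzero : G =ᵐ[ρ] 0 := by
      have hGint0 : ∫ x, G x ∂ρ ≤ 0 := by
        rw [hG]
        rw [integral_add hint1 hinv_int, integral_sub hint (integrable_const 1), hinv_eq]
        simp only [integral_const, measure_univ, probReal_univ, ENNReal.toReal_one, smul_eq_mul, one_mul]
        have : (∫⁻ x, (f x)⁻¹ ∂ρ).toReal ≤ 1 := by
          simpa using ENNReal.toReal_mono (by simp) hJle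
        linarith
      have := (integral_eq_zero_iff_of_nonneg_ae hGnn hGint).mp
        (le_antisymm hGint0 (integral_nonneg_of_ae hGnn))
      exact this
    have hfone : ∀ᵐ x ∂ρ, f x = 1 := by
      filter_upwards [hpos, hlt, hGzero] with x hx hx' hxG
      have ht : 0 < (f x).toReal := ENNReal.toReal_pos hx.ne' hx'.ne
      have htone : (f x).toReal = 1 := by
        by_contra hne
        have h2 := Real.log_lt_sub_one_of_pos (inv_pos.mpr ht) (by
          simpa [inv_eq_one] using hne)
        rw [Real.log_inv] at h2
        simp only [hG, Pi.zero_apply, ENNReal.toReal_inv] at hxG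
        linarith
      calc f x = ENNReal.ofReal (f x).toReal := (ENNReal.ofReal_toReal hx'.ne).symm
        _ = 1 := by rw [htone]; simp
    -- transfer to ν
    have hA : MeasurableSet {x | f x ≠ 1} := (hfm (measurableSet_singleton 1)).compl
    have hρA : ρ {x | f x ≠ 1} = 0 := by
      simpa [ae_iff] using hfone
    have hνA : ∀ᵐ x ∂ν, x ∈ {x | f x ≠ 1} → f x = 0 := by
      rw [← hwd, withDensity_apply _ hA] at hρA
      exact (setLIntegral_eq_zero_iff hA hfm).mp hρA
    have h01 : ∀ᵐ x ∂ν, f x = Set.indicator {x | f x = 1} (fun _ => 1) x := by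
      filter_upwards [hνA] with x hx
      by_cases hx1 : f x = 1
      · simp [Set.indicator_of_mem, hx1]
      · rw [hx hx1, Set.indicator_of_notMem (show x ∉ {x | f x = 1} from hx1)]
    have h1 : ν {x | f x = 1} = 1 := by
      have : ∫⁻ x, f x ∂ν = 1 := by
        rw [Measure.lintegral_rnDeriv hac]; simp
      rw [lintegral_congr_ae h01] at this
      rwa [lintegral_indicator hs1, setLIntegral_one] at this
    have hfone' : f =ᵐ[ν] 1 := by
      have : ν {x | f x = 1}ᶜ = 0 := by
        rw [measure_compl hs1 (measure_ne_top _ _), h1]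
        simp
      filter_upwards [measure_eq_zero_iff_ae_notMem.mp this] with x hx
      simpa using hx
    rw [← hwd, withDensity_congr_ae hfone', withDensity_one]
  · simp at h0

section Kern
variable {X : Type*} [MeasurableSpace X] {γ : Type*} [MeasurableSpace γ]
  [MeasurableSpace.CountablyGenerated γ]
  (P Q : Kernel X γ) [IsFiniteKernel P] [IsFiniteKernel Q]

lemma measurable_klDiv : Measurable (fun x => klDiv (P x) (Q x)) := by
  classical
  set f : X → γ → ℝ := fun x y => Real.log (Kernel.rnDeriv P Q x y).toReal with hfdef
  have hfm : StronglyMeasurable (Function.uncurry f) :=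
    (Real.measurable_log.comp
      ((Kernel.measurable_rnDeriv P Q).ennreal_toReal)).stronglyMeasurable
  have hA : MeasurableSet {x | P x ≪ Q x} :=
    Kernel.measurableSet_absolutelyContinuous P Q
  have hB : MeasurableSet {x | Integrable (f x) (P x)} :=
    measurableSet_kernel_integrable hfm
  have hI : Measurable (fun x => ∫ y, f x y ∂(P x)) :=
    hfm.integral_kernel_prod_right.measurable
  have hFm : Measurable (fun x : X =>
      if x ∈ {x | P x ≪ Q x} ∩ {x | Integrable (f x) (P x)} then
        ENNReal.ofReal (∫ y, f x y ∂(P x)) else (⊤ : ℝ≥0∞)) := by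
    exact Measurable.ite (hA.inter hB) hI.ennreal_ofReal measurable_const
  have hF : ∀ x, klDiv (P x) (Q x) =
      if x ∈ {x | P x ≪ Q x} ∩ {x | Integrable (f x) (P x)} then
        ENNReal.ofReal (∫ y, f x y ∂(P x)) else (⊤ : ℝ≥0∞) := by
    intro x
    by_cases hac : P x ≪ Q x
    · have heq : (fun y => Real.log ((P x).rnDeriv (Q x) y).toReal) =ᵐ[P x] f x := by
        filter_upwards [hac.ae_le (Kernel.rnDeriv_eq_rnDeriv_measure (κ := P) (η := Q) (a := x))]
          with y hy
        simp [hfdef, hy]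
      by_cases hb : Integrable (f x) (P x)
      · have hb' : Integrable (fun y => Real.log ((P x).rnDeriv (Q x) y).toReal) (P x) :=
          (integrable_congr heq).mpr hb
        rw [klDiv, if_pos ⟨hac, hb'⟩, if_pos (by exact ⟨hac, hb⟩)]
        exact congrArg ENNReal.ofReal (integral_congr_ae heq)
      · have hb' : ¬ Integrable (fun y => Real.log ((P x).rnDeriv (Q x) y).toReal) (P x) :=
          fun hh => hb ((integrable_congr heq).mp hh)
        rw [klDiv, if_neg (fun hh => hb' hh.2), if_neg (fun hh => hb hh.2)]
    · rw [klDiv, if_neg (fun hh => hac hh.1), if_neg (fun hh => hac hh.1)]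
  simpa [funext hF] using hFm

end Kern

/-- **Proposition 2 of BayesFlow.** Suppose there exists a sufficient summary statistic, i.e.
a Markov kernel `P'` on summaries such that the true posterior factors as `P x = P' (h x)`
for `μ`-almost every `x`. If the expected KL divergence between the true posterior and the
model-induced posterior `(e (h x))⁻¹_* γ` vanishes, then for `μ`-almost every `x`, sampling
`z ∼ γ` and applying the inverse map conditioned on the learned summary `h x` yields samples
from the true posterior: `(e (h x))⁻¹_* γ = P x`. -/
theorem bayesflow_summary_correct_posterior_sampling
    {X S : Type*} [MeasurableSpace X] [MeasurableSpace S]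
    (μ : Measure X) [IsProbabilityMeasure μ]
    (D : ℕ) (hD : 0 < D)
    (γ : Measure (Fin D → ℝ))
    (hγ : γ = Measure.pi fun _ => gaussianReal 0 1)
    (P : Kernel X (Fin D → ℝ)) [IsMarkovKernel P]
    (h : X → S) (hmeas : Measurable h)
    (P' : Kernel S (Fin D → ℝ)) [IsMarkovKernel P']
    (hsuff : ∀ᵐ x ∂μ, P x = P' (h x))
    (e : S → (Fin D → ℝ) ≃ᵐ (Fin D → ℝ))
    (Q : Kernel X (Fin D → ℝ)) [IsMarkovKernel Q]
    (hQ : ∀ x, Q x = γ.map (e (h x)).symm)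
    (hKL : ∫⁻ x, klDiv (P x) (Q x) ∂μ = 0) :
    ∀ᵐ x ∂μ, γ.map (e (h x)).symm = P x := by
  have hmeasF : Measurable (fun x => klDiv (P x) (Q x)) := measurable_klDiv P Q
  have hae : ∀ᵐ x ∂μ, klDiv (P x) (Q x) = 0 := (lintegral_eq_zero_iff hmeasF).mp hKL
  filter_upwards [hae] with x hx
  rw [← hQ x]
  exact (eq_of_klDiv_eq_zero hx).symm
end

section
/- The Jacobian determinant of an affine coupling block has the closed form given by the scaling networks: let s₁, t₁ : ℝ^m → ℝ^k and s₂, t₂ : ℝ^k → ℝ^m be differentiable, and let F : ℝ^k × ℝ^m → ℝ^k × ℝ^m be defined by F(u₁, u₂) = (v₁, v₂) with v₁ = u₁ ⊙ exp(s₁(u₂)) + t₁(u₂) and v₂ = u₂ ⊙ exp(s₂(v₁)) + t₂(v₁). Then F is differentiable at every point u = (u₁, u₂), and the determinant of its derivative equals det DF(u) = exp(∑_{i=1}^{k} s₁(u₂)_i) · exp(∑_{j=1}^{m} s₂(v₁)_j); in particular det DF(u) > 0 everywhere, so the Jacobian determinant never vanishes. -/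
/-!
The coupling block factors as `G ∘ H` with `H (u₁, u₂) = (u₁ ⊙ exp (s₁ u₂) + t₁ u₂, u₂)` and
`G (v₁, u₂) = (v₁, u₂ ⊙ exp (s₂ v₁) + t₂ v₁)`. Each factor fixes one component, so its derivative
is block triangular with an identity block, and its determinant is that of the partial derivative
in the other component. That partial derivative is the diagonal map `diag (exp (s y))`, whatever
the conditioning networks are, so the chain rule gives the product of two exponentials.
-/

open scoped BigOperators

/-- The forward pass of an affine coupling block:
`v₁ = u₁ ⊙ exp (s₁ u₂) + t₁ u₂` and `v₂ = u₂ ⊙ exp (s₂ v₁) + t₂ v₁` (componentwise). -/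
noncomputable def couplingForward {k m : ℕ}
    (s₁ t₁ : (Fin m → ℝ) → (Fin k → ℝ)) (s₂ t₂ : (Fin k → ℝ) → (Fin m → ℝ)) :
    (Fin k → ℝ) × (Fin m → ℝ) → (Fin k → ℝ) × (Fin m → ℝ) := fun u =>
  let v₁ : Fin k → ℝ := fun i => u.1 i * Real.exp (s₁ u.2 i) + t₁ u.2 i
  let v₂ : Fin m → ℝ := fun j => u.2 j * Real.exp (s₂ v₁ j) + t₂ v₁ j
  (v₁, v₂)

namespace LinearMap

variable {R M M' : Type*} [CommRing R] [AddCommGroup M] [Module R M] [AddCommGroup M']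
  [Module R M'] [Module.Free R M] [Module.Finite R M] [Module.Free R M'] [Module.Finite R M']

theorem det_prod_snd (f : M × M' →ₗ[R] M) :
    (f.prod (snd R M M')).det = (f ∘ₗ inl R M M').det := by
  classical
  let b := Module.Free.chooseBasis R M
  let b' := Module.Free.chooseBasis R M'
  have hblocks : toMatrix (b.prod b') (b.prod b') (f.prod (snd R M M')) =
      Matrix.fromBlocks (toMatrix b b (f ∘ₗ inl R M M')) (toMatrix b' b (f ∘ₗ inr R M M'))
        0 1 := by
    ext (i | i) (j | j) <;>
      simp [toMatrix_apply, Module.Basis.prod_apply, Matrix.one_apply, Finsupp.single_apply,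
        eq_comm]
  rw [← det_toMatrix (b.prod b'), hblocks, Matrix.det_fromBlocks_zero₂₁, Matrix.det_one, mul_one,
    det_toMatrix]

theorem det_fst_prod (g : M × M' →ₗ[R] M') :
    ((fst R M M').prod g).det = (g ∘ₗ inr R M M').det := by
  classical
  let b := Module.Free.chooseBasis R M
  let b' := Module.Free.chooseBasis R M'
  have hblocks : toMatrix (b.prod b') (b.prod b') ((fst R M M').prod g) =
      Matrix.fromBlocks 1 0
        (toMatrix b b' (g ∘ₗ inl R M M')) (toMatrix b' b' (g ∘ₗ inr R M M')) := by
    ext (i | i) (j | j) <;>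
      simp [toMatrix_apply, Module.Basis.prod_apply, Matrix.one_apply, Finsupp.single_apply,
        eq_comm]
  rw [← det_toMatrix (b.prod b'), hblocks, Matrix.det_fromBlocks_zero₁₂, Matrix.det_one, one_mul,
    det_toMatrix]

end LinearMap

theorem ContinuousLinearMap.det_comp {R M : Type*} [CommRing R] [TopologicalSpace M]
    [AddCommGroup M] [Module R M] (f g : M →L[R] M) : (f.comp g).det = f.det * g.det :=
  LinearMap.det_comp _ _

section

variable {𝕜 E F : Type*} [NontriviallyNormedField 𝕜] [NormedAddCommGroup E] [NormedSpace 𝕜 E]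
  [NormedAddCommGroup F] [NormedSpace 𝕜 F] [FiniteDimensional 𝕜 E] [FiniteDimensional 𝕜 F]

theorem det_fderiv_prodMk_snd {f : E × F → E} {p : E × F} (hf : DifferentiableAt 𝕜 f p) :
    (fderiv 𝕜 (fun q => (f q, q.2)) p).det = (fderiv 𝕜 (fun x => f (x, p.2)) p.1).det := by
  have hpartial : HasFDerivAt (fun x => f (x, p.2)) ((fderiv 𝕜 f p).comp (.inl 𝕜 E F)) p.1 :=
    hf.hasFDerivAt.comp p.1 (hasFDerivAt_prodMk_left p.1 p.2)
  rw [hf.fderiv_prodMk differentiableAt_snd, fderiv_snd, hpartial.fderiv]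
  exact LinearMap.det_prod_snd _

theorem det_fderiv_prodMk_fst {g : E × F → F} {p : E × F} (hg : DifferentiableAt 𝕜 g p) :
    (fderiv 𝕜 (fun q => (q.1, g q)) p).det = (fderiv 𝕜 (fun y => g (p.1, y)) p.2).det := by
  have hpartial : HasFDerivAt (fun y => g (p.1, y)) ((fderiv 𝕜 g p).comp (.inr 𝕜 E F)) p.2 :=
    hg.hasFDerivAt.comp p.2 (hasFDerivAt_prodMk_right p.1 p.2)
  rw [differentiableAt_fst.fderiv_prodMk hg, fderiv_fst, hpartial.fderiv]
  exact LinearMap.det_fst_prod _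

end

noncomputable def affineCoupling {ι Y : Type*} (s t : Y → ι → ℝ) (x : ι → ℝ) (y : Y) : ι → ℝ :=
  fun i => x i * Real.exp (s y i) + t y i

theorem det_fderiv_affineCoupling {ι Y : Type*} [Fintype ι] (s t : Y → ι → ℝ) (x : ι → ℝ) (y : Y) :
    (fderiv ℝ (fun x => affineCoupling s t x y) x).det = Real.exp (∑ i, s y i) := by
  have hderiv : HasFDerivAt (fun x => affineCoupling s t x y)
      (ContinuousLinearMap.pi fun i =>
        (Real.exp (s y i) • ContinuousLinearMap.id ℝ ℝ).comp (ContinuousLinearMap.proj i)) x := by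
    rw [hasFDerivAt_pi']
    intro i
    refine (((hasFDerivAt_apply (𝕜 := ℝ) i x).mul_const (Real.exp (s y i))).add_const
      (t y i)).congr_fderiv ?_
    ext
    simp [mul_comm]
  rw [hderiv.fderiv, ContinuousLinearMap.det_pi, Real.exp_sum]
  simp

theorem Differentiable.affineCoupling {ι Y Z : Type*} [NormedAddCommGroup Y] [NormedSpace ℝ Y]
    [NormedAddCommGroup Z] [NormedSpace ℝ Z] {s t : Y → ι → ℝ}
    (hs : Differentiable ℝ s) (ht : Differentiable ℝ t)
    {x : Z → ι → ℝ} {y : Z → Y} (hx : Differentiable ℝ x) (hy : Differentiable ℝ y) :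
    Differentiable ℝ (fun z => affineCoupling s t (x z) (y z)) := by
  rw [differentiable_pi] at hs ht hx ⊢
  intro i
  exact ((hx i).mul ((hs i).comp hy).exp).add ((ht i).comp hy)

theorem couplingForward_eq_comp {k m : ℕ}
    (s₁ t₁ : (Fin m → ℝ) → (Fin k → ℝ)) (s₂ t₂ : (Fin k → ℝ) → (Fin m → ℝ)) :
    couplingForward s₁ t₁ s₂ t₂ = (fun q => (q.1, affineCoupling s₂ t₂ q.2 q.1)) ∘
      (fun q => (affineCoupling s₁ t₁ q.1 q.2, q.2)) :=
  rfl

theorem coupling_block_jacobian_det_general {k m : ℕ}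
    (s₁ t₁ : (Fin m → ℝ) → (Fin k → ℝ)) (s₂ t₂ : (Fin k → ℝ) → (Fin m → ℝ))
    (hs₁ : Differentiable ℝ s₁) (ht₁ : Differentiable ℝ t₁)
    (hs₂ : Differentiable ℝ s₂) (ht₂ : Differentiable ℝ t₂)
    (u : (Fin k → ℝ) × (Fin m → ℝ)) :
    DifferentiableAt ℝ (couplingForward s₁ t₁ s₂ t₂) u ∧
    (fderiv ℝ (couplingForward s₁ t₁ s₂ t₂) u).det =
      Real.exp (∑ i, s₁ u.2 i) * Real.exp (∑ j, s₂ (couplingForward s₁ t₁ s₂ t₂ u).1 j) ∧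
    0 < (fderiv ℝ (couplingForward s₁ t₁ s₂ t₂) u).det := by
  have hlayer₁ : Differentiable ℝ fun q : (Fin k → ℝ) × (Fin m → ℝ) =>
      affineCoupling s₁ t₁ q.1 q.2 := hs₁.affineCoupling ht₁ differentiable_fst differentiable_snd
  have hlayer₂ : Differentiable ℝ fun q : (Fin k → ℝ) × (Fin m → ℝ) =>
      affineCoupling s₂ t₂ q.2 q.1 := hs₂.affineCoupling ht₂ differentiable_snd differentiable_fst
  have hdiff₁ := hlayer₁.prodMk differentiable_snd
  have hdiff₂ := differentiable_fst.prodMk hlayer₂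
  have hdet : (fderiv ℝ (couplingForward s₁ t₁ s₂ t₂) u).det =
      Real.exp (∑ i, s₁ u.2 i) * Real.exp (∑ j, s₂ (couplingForward s₁ t₁ s₂ t₂ u).1 j) := by
    have hchain : fderiv ℝ (couplingForward s₁ t₁ s₂ t₂) u =
        (fderiv ℝ (fun q => (q.1, affineCoupling s₂ t₂ q.2 q.1))
          (affineCoupling s₁ t₁ u.1 u.2, u.2)).comp
          (fderiv ℝ (fun q => (affineCoupling s₁ t₁ q.1 q.2, q.2)) u) := by
      rw [couplingForward_eq_comp]
      exact fderiv_comp u (hdiff₂ _) (hdiff₁ u)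
    rw [hchain, ContinuousLinearMap.det_comp, det_fderiv_prodMk_fst (hlayer₂ _),
      det_fderiv_prodMk_snd (hlayer₁ u), det_fderiv_affineCoupling, det_fderiv_affineCoupling,
      mul_comm]
    rfl
  refine ⟨couplingForward_eq_comp s₁ t₁ s₂ t₂ ▸ (hdiff₂.comp hdiff₁) u, hdet, ?_⟩
  rw [hdet]
  positivity

/-- The Jacobian determinant of an affine coupling block has the closed form given by the
scaling networks: if `s₁, t₁, s₂, t₂` are differentiable, then the coupling block `F` is
differentiable at every point `u`, and
`det DF(u) = exp (∑ i, s₁ u₂ i) * exp (∑ j, s₂ v₁ j)` where `v₁` is the first output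
component of `F u`; in particular the Jacobian determinant is everywhere positive. -/
theorem coupling_block_jacobian_det {k m : ℕ} (hk : 0 < k) (hm : 0 < m)
    (s₁ t₁ : (Fin m → ℝ) → (Fin k → ℝ)) (s₂ t₂ : (Fin k → ℝ) → (Fin m → ℝ))
    (hs₁ : Differentiable ℝ s₁) (ht₁ : Differentiable ℝ t₁)
    (hs₂ : Differentiable ℝ s₂) (ht₂ : Differentiable ℝ t₂)
    (u : (Fin k → ℝ) × (Fin m → ℝ)) :
    DifferentiableAt ℝ (couplingForward s₁ t₁ s₂ t₂) u ∧
    (fderiv ℝ (couplingForward s₁ t₁ s₂ t₂) u).det =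
      Real.exp (∑ i, s₁ u.2 i) * Real.exp (∑ j, s₂ (couplingForward s₁ t₁ s₂ t₂ u).1 j) ∧
    0 < (fderiv ℝ (couplingForward s₁ t₁ s₂ t₂) u).det :=
  coupling_block_jacobian_det_general s₁ t₁ s₂ t₂ hs₁ ht₁ hs₂ ht₂ u
end

section
/- Uniformity of the simulation-based calibration rank statistic: let X₀, X₁, …, X_L be independent real-valued random variables with the same distribution ν, where ν has no atoms. Define the rank statistic r = #{l ∈ {1, …, L} : X_l < X₀}. Then r is uniformly distributed on {0, 1, …, L}: for every k ∈ {0, 1, …, L}, P(r = k) = 1/(L+1). -/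
open MeasureTheory ProbabilityTheory
open scoped ENNReal Classical

/-!
Almost surely the `X l` are pairwise distinct, since for independent `X i, X j` the event
`X i = X j` is the diagonal under the product law `ν ⊗ ν`, which is null because `ν` has no
atoms. For a tuple of distinct values the ranks `rank x i = #{l | x l < x i}` enumerate
`{0, …, L}` bijectively, so for each `k` the events `{rank x i = k}`, `i = 0, …, L`, partition
the sample space up to a null set. The joint law `ν^{⊗(L+1)}` is invariant under permutations of
the coordinates, so these `L + 1` events have the same probability, which must be `1 / (L + 1)`;
the statistic `r` is the rank of index `0`.
-/

open Finset Function

section Rank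

variable {ι α : Type*} [Fintype ι] [LinearOrder α]

def rank (x : ι → α) (i : ι) : ℕ := #{l | x l < x i}

lemma rank_lt_card (x : ι → α) (i : ι) : rank x i < Fintype.card ι :=
  card_lt_card <| filter_ssubset.2 ⟨i, mem_univ i, lt_irrefl _⟩

lemma rank_lt_rank {x : ι → α} {i j : ι} (h : x i < x j) : rank x i < rank x j :=
  card_lt_card <| (ssubset_iff_of_subset fun l hl => by
    simp only [mem_filter, mem_univ, true_and] at hl ⊢; exact hl.trans h).2
    ⟨i, by simp [h], by simp⟩

lemma rank_injective {x : ι → α} (hx : Injective x) : Injective (rank x) := by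
  intro i j hij
  by_contra hne
  rcases lt_or_gt_of_ne (hx.ne hne) with h | h
  · exact (rank_lt_rank h).ne hij
  · exact (rank_lt_rank h).ne' hij

lemma existsUnique_rank_eq {x : ι → α} (hx : Injective x) {k : ℕ} (hk : k < Fintype.card ι) :
    ∃! i, rank x i = k := by
  let r : ι → Fin (Fintype.card ι) := fun i => ⟨rank x i, rank_lt_card x i⟩
  have hr : Bijective r := (Fintype.bijective_iff_injective_and_card r).2
    ⟨fun i j h => rank_injective hx (Fin.val_eq_of_eq h), (Fintype.card_fin _).symm⟩
  obtain ⟨i, hi⟩ := hr.2 ⟨k, hk⟩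
  replace hi : rank x i = k := congrArg Fin.val hi
  exact ⟨i, hi, fun j hj => hr.1 (Fin.ext (hj.trans hi.symm))⟩

lemma rank_comp_perm (x : ι → α) (σ : Equiv.Perm ι) (i : ι) :
    rank (x ∘ σ) i = rank x (σ i) :=
  card_equiv σ (by simp)

end Rank

section Diagonal

variable {Ω α : Type*} [MeasurableSpace Ω] [MeasurableSpace α] [MeasurableEq α]

lemma Measure.prod_diagonal_eq_zero (μ ν : Measure α) [SFinite ν] [NullSingletonClass ν] :
    μ.prod ν (Set.diagonal α) = 0 := by
  rw [Measure.measure_prod_null measurableSet_diagonal]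
  exact Filter.Eventually.of_forall fun a => by simp [Set.preimage, Set.diagonal]

lemma ProbabilityTheory.IndepFun.measure_eq_eq_zero {P : Measure Ω} [IsFiniteMeasure P]
    {X Y : Ω → α} (hX : Measurable X) (hY : Measurable Y) (h : IndepFun X Y P)
    [NullSingletonClass (P.map Y)] : P {ω | X ω = Y ω} = 0 := by
  change P ((fun ω => (X ω, Y ω)) ⁻¹' Set.diagonal α) = 0
  rw [← Measure.map_apply (hX.prodMk hY) measurableSet_diagonal,
    h.map_prod_eq_prod_map_map hX.aemeasurable hY.aemeasurable]
  exact Measure.prod_diagonal_eq_zero _ _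

lemma Measure.ae_injective_pi {ι : Type*} [Fintype ι] (ν : Measure α) [IsProbabilityMeasure ν]
    [NullSingletonClass ν] : ∀ᵐ x ∂Measure.pi fun _ : ι => ν, Injective x := by
  have hind : iIndepFun (fun i (x : ι → α) => x i) (Measure.pi fun _ => ν) :=
    iIndepFun_pi (X := fun _ => id) fun _ => aemeasurable_id
  simp only [Injective, ae_all_iff]
  intro i j
  rcases eq_or_ne i j with rfl | hij
  · exact Filter.Eventually.of_forall fun _ _ => rfl
  have : NullSingletonClass ((Measure.pi fun _ : ι => ν).map (eval j)) := by
    rw [(measurePreserving_eval _ j).map_eq]; infer_instance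
  exact (measure_eq_zero_iff_ae_notMem.1 ((hind.indepFun hij).measure_eq_eq_zero
    (measurable_pi_apply i) (measurable_pi_apply j))).mono fun _ hx hxij => absurd hxij hx

end Diagonal

lemma Measure.pi_map_comp_perm {ι α : Type*} [Fintype ι] [MeasurableSpace α] (ν : Measure α)
    [SigmaFinite ν] (σ : Equiv.Perm ι) :
    (Measure.pi fun _ : ι => ν).map (· ∘ σ) = Measure.pi fun _ : ι => ν := by
  convert Measure.pi_map_piCongrLeft σ.symm fun _ : ι => ν using 2
  ext x i
  simp [MeasurableEquiv.coe_piCongrLeft, Equiv.piCongrLeft_apply_eq_cast]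

section Exchangeable

variable {ι α : Type*} [Fintype ι] [LinearOrder α] [TopologicalSpace α]
  [OrderClosedTopology α] [SecondCountableTopology α] [MeasurableSpace α]
  [OpensMeasurableSpace α]

lemma measurable_rank (i : ι) : Measurable fun x : ι → α => rank x i := by
  have : (fun x : ι → α => rank x i) = fun x => ∑ l, if x l < x i then 1 else 0 := by
    ext x; exact card_filter _ _
  rw [this]
  exact Finset.measurable_sum _ fun l _ => Measurable.ite
    (measurableSet_lt (measurable_pi_apply l) (measurable_pi_apply i)) measurable_const
    measurable_const

theorem measure_rank_eq_inv_card_of_exchangeable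
    {μ : Measure (ι → α)} [IsProbabilityMeasure μ]
    (hexch : ∀ σ : Equiv.Perm ι, μ.map (· ∘ σ) = μ) (hinj : ∀ᵐ x ∂μ, Injective x)
    {k : ℕ} (hk : k < Fintype.card ι) (i : ι) :
    μ {x | rank x i = k} = (Fintype.card ι : ℝ≥0∞)⁻¹ := by
  set A : ι → Set (ι → α) := fun j => {x | rank x j = k}
  have hA (j : ι) : MeasurableSet (A j) := measurable_rank j (measurableSet_singleton k)
  have hA_eq (j : ι) : μ (A j) = μ (A i) := by
    have hσ : (· ∘ Equiv.swap i j) ⁻¹' A i = A j := by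
      ext x; simp [A, rank_comp_perm]
    have hσm : Measurable fun x : ι → α => x ∘ Equiv.swap i j := by fun_prop
    rw [← hσ, ← Measure.map_apply hσm (hA i), hexch]
  have hA_disj : Pairwise (AEDisjoint μ on A) := fun j j' hjj' => by
    refine measure_mono_null ?_ (ae_iff.1 hinj)
    exact fun x ⟨hj, hj'⟩ hx => hjj' ((existsUnique_rank_eq hx hk).unique hj hj')
  have hA_cover : μ (⋃ j, A j) = 1 := by
    rw [← measure_univ (μ := μ),
      ← ae_mem_iff_measure_eq (MeasurableSet.iUnion hA).nullMeasurableSet]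
    exact hinj.mono fun x hx => Set.mem_iUnion.2 (existsUnique_rank_eq hx hk).exists
  refine ENNReal.eq_inv_of_mul_eq_one_left ?_
  calc μ (A i) * Fintype.card ι = ∑ j, μ (A j) := by simp [hA_eq, mul_comm]
    _ = 1 := by
      rw [← hA_cover, measure_iUnion₀ hA_disj fun j => (hA j).nullMeasurableSet, tsum_fintype]

theorem ProbabilityTheory.iIndepFun.measure_rank_eq_inv_card {Ω : Type*} [MeasurableSpace Ω]
    {P : Measure Ω} {X : ι → Ω → α} (hX : ∀ i, Measurable (X i)) (hind : iIndepFun X P)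
    {ν : Measure α} (hlaw : ∀ i, P.map (X i) = ν) [NullSingletonClass ν]
    {k : ℕ} (hk : k < Fintype.card ι) (i : ι) :
    P {ω | rank (X · ω) i = k} = (Fintype.card ι : ℝ≥0∞)⁻¹ := by
  have := hind.isProbabilityMeasure
  have : IsProbabilityMeasure ν := hlaw i ▸ Measure.isProbabilityMeasure_map (hX i).aemeasurable
  have hJ : P.map (fun ω l => X l ω) = Measure.pi fun _ => ν := by
    rw [hind.map_fun_eq_pi_map fun l => (hX l).aemeasurable]
    simp_rw [hlaw]
  have hJm : Measurable fun ω l => X l ω := measurable_pi_lambda _ hX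
  have hA : MeasurableSet {x : ι → α | rank x i = k} :=
    measurable_rank i (measurableSet_singleton k)
  change P ((fun ω l => X l ω) ⁻¹' {x | rank x i = k}) = _
  rw [← Measure.map_apply hJm hA, hJ]
  exact measure_rank_eq_inv_card_of_exchangeable (Measure.pi_map_comp_perm ν)
    (Measure.ae_injective_pi ν) hk i

end Exchangeable

theorem sbc_rank_statistic_uniform_general
    {Ω : Type*} [MeasurableSpace Ω] (P : Measure Ω)
    (L : ℕ) (X : Fin (L + 1) → Ω → ℝ)
    (hX_meas : ∀ l, Measurable (X l))
    (hX_indep : iIndepFun X P)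
    (ν : Measure ℝ) (hX_law : ∀ l, P.map (X l) = ν)
    (hν_noatom : ∀ a : ℝ, ν {a} = 0)
    (r : Ω → ℕ)
    (hr : ∀ ω, r ω = (Finset.univ.filter fun l : Fin (L + 1) => l ≠ 0 ∧ X l ω < X 0 ω).card)
    (k : ℕ) (hk : k ≤ L) :
    P {ω | r ω = k} = ((L : ℝ≥0∞) + 1)⁻¹ := by
  have : NullSingletonClass ν := ⟨hν_noatom⟩
  have hr_rank : {ω | r ω = k} = {ω | rank (X · ω) 0 = k} := by
    ext ω
    simp only [Set.mem_ofPred_eq, hr, rank]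
    congr! 3 with l
    exact and_iff_right_of_imp fun h h0 => (h0 ▸ h).false
  rw [hr_rank, hX_indep.measure_rank_eq_inv_card hX_meas hX_law (by simpa using hk) 0]
  simp

/-- **Uniformity of the simulation-based calibration rank statistic.** If
`X 0, X 1, …, X L` are i.i.d. real-valued random variables whose common law `ν` has no atoms,
then the rank statistic `r ω = #{l ≠ 0 : X l ω < X 0 ω}` is uniformly distributed on
`{0, 1, …, L}`: for every `k ≤ L`, `P(r = k) = 1 / (L + 1)`. -/
theorem sbc_rank_statistic_uniform
    {Ω : Type*} [MeasurableSpace Ω] (P : Measure Ω) [IsProbabilityMeasure P]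
    (L : ℕ) (X : Fin (L + 1) → Ω → ℝ)
    (hX_meas : ∀ l, Measurable (X l))
    (hX_indep : iIndepFun X P)
    (ν : Measure ℝ) (hX_law : ∀ l, P.map (X l) = ν)
    (hν_noatom : ∀ a : ℝ, ν {a} = 0)
    (r : Ω → ℕ)
    (hr : ∀ ω, r ω = (Finset.univ.filter fun l : Fin (L + 1) => l ≠ 0 ∧ X l ω < X 0 ω).card)
    (k : ℕ) (hk : k ≤ L) :
    P {ω | r ω = k} = ((L : ℝ≥0∞) + 1)⁻¹ :=
  sbc_rank_statistic_uniform_general P L X hX_meas hX_indep ν hX_law hν_noatom r hr k hk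
end
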